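/- Let u ≥ 1 be an integer. For every integer n ≥ 0, the polynomial ∑_{i=0}^{p−1} X^{i·p^{n+α}} (that is, [p]_{X^{p^{n+α}}} = Φ_{p^{n+α+1}}(X)) divides X^{u·p^n} − X^{p^n} in ℤ[X] if and only if u ≡ 1 (mod p^{α+1}). -/
import Mathlib

open Finset Polynomial

lemma cyclo_dvd_X_pow_sub_one_iff (m k : ℕ) (hm : 0 < m) :
    (Polynomial.cyclotomic m ℤ) ∣ (X : Polynomial ℤ) ^ k - 1 ↔ m ∣ k := by
  constructor
  · intro h
    have hζ : IsPrimitiveRoot (Complex.exp (2 * Real.pi * Complex.I / m)) m :=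
      Complex.isPrimitiveRoot_exp m hm.ne'
    set ζ := Complex.exp (2 * Real.pi * Complex.I / m)
    have h2 := map_dvd (Polynomial.mapRingHom (Int.castRingHom ℂ)) h
    simp only [Polynomial.coe_mapRingHom, Polynomial.map_sub, Polynomial.map_pow,
      Polynomial.map_X, Polynomial.map_one, Polynomial.map_cyclotomic] at h2
    have hroot : (Polynomial.cyclotomic m ℂ).eval ζ = 0 := (hζ.isRoot_cyclotomic hm).eq_zero
    obtain ⟨g, hg⟩ := h2
    have : ζ ^ k - 1 = 0 := by
      have := congrArg (Polynomial.eval ζ) hg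
      simpa [hroot] using this
    exact (hζ.pow_eq_one_iff_dvd k).mp (by linear_combination this)
  · rintro ⟨d, rfl⟩
    refine (Polynomial.cyclotomic.dvd_X_pow_sub_one m ℤ).trans ?_
    have : ((X : Polynomial ℤ) ^ m) ^ d - 1 ^ d = X ^ (m * d) - 1 := by
      rw [← pow_mul, one_pow]
    exact this ▸ sub_dvd_pow_sub_pow _ 1 d

theorem stmt7 (p : ℕ) (hp : p.Prime) (α : ℕ) (u : ℕ) (hu : 1 ≤ u) (n : ℕ) :
    (∑ i ∈ Finset.range p, (Polynomial.X : Polynomial ℤ) ^ (i * p ^ (n + α))) ∣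
        ((Polynomial.X : Polynomial ℤ) ^ (u * p ^ n) - Polynomial.X ^ p ^ n) ↔
      u ≡ 1 [MOD p ^ (α + 1)] := by
  have hsum : (∑ i ∈ Finset.range p, (Polynomial.X : Polynomial ℤ) ^ (i * p ^ (n + α)))
      = Polynomial.cyclotomic (p ^ (n + α + 1)) ℤ := by
    rw [Polynomial.cyclotomic_prime_pow_eq_geom_sum hp]
    exact Finset.sum_congr rfl fun i _ => by rw [← pow_mul, mul_comm]
  rw [hsum]
  have hfac : (Polynomial.X : Polynomial ℤ) ^ (u * p ^ n) - X ^ p ^ n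
      = X ^ p ^ n * (X ^ ((u - 1) * p ^ n) - 1) := by
    rw [mul_sub, mul_one, ← pow_add]
    congr 2
    have : u * p ^ n = p ^ n + (u - 1) * p ^ n := by
      rw [← Nat.succ_pred_eq_of_pos hu, Nat.succ_mul]
      simp [Nat.add_comm]
    omega
  rw [hfac]
  have hprime : Prime (Polynomial.cyclotomic (p ^ (n + α + 1)) ℤ) :=
    UniqueFactorizationMonoid.irreducible_iff_prime.mp
      (Polynomial.cyclotomic.irreducible (pow_pos hp.pos _))
  haveI : Fact p.Prime := ⟨hp⟩
  have hnd : ¬ (Polynomial.cyclotomic (p ^ (n + α + 1)) ℤ) ∣ (X : Polynomial ℤ) ^ p ^ n := by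
    intro h
    have := map_dvd (Polynomial.evalRingHom (1 : ℤ)) h
    simp only [Polynomial.coe_evalRingHom, Polynomial.eval_pow, Polynomial.eval_X, one_pow,
      Polynomial.eval_one_cyclotomic_prime_pow] at this
    have h1 : (p : ℤ) ≤ 1 := Int.le_of_dvd one_pos this
    have h2 := hp.one_lt
    omega
  have key : (Polynomial.cyclotomic (p ^ (n + α + 1)) ℤ) ∣
      X ^ p ^ n * ((X : Polynomial ℤ) ^ ((u - 1) * p ^ n) - 1) ↔
      (Polynomial.cyclotomic (p ^ (n + α + 1)) ℤ) ∣ (X ^ ((u - 1) * p ^ n) - 1) := by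
    constructor
    · intro h
      rcases hprime.dvd_mul.mp h with h | h
      · exact absurd h hnd
      · exact h
    · exact fun h => Dvd.dvd.mul_left h _
  rw [key, cyclo_dvd_X_pow_sub_one_iff _ _ (pow_pos hp.pos _)]
  have : p ^ (n + α + 1) ∣ (u - 1) * p ^ n ↔ p ^ (α + 1) ∣ u - 1 := by
    rw [show n + α + 1 = (α + 1) + n from by ring, pow_add,
      Nat.mul_dvd_mul_iff_right (pow_pos hp.pos n)]
  rw [this, Nat.ModEq.comm, Nat.modEq_iff_dvd' hu]
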